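/- If v is a simplicial vertex of a finite graph G, then θ(G) = 1 + θ(G − N[v]), where θ denotes the minimum clique cover number and G − N[v] is the induced subgraph on V(G) \ N[v]. -/
import Mathlib


/-- The minimum clique cover number: least size of a partition of the vertex set
into cliques. -/
noncomputable def cliqueCoverNumber {V : Type*} (G : SimpleGraph V) : ℕ :=
  sInf {n : ℕ | ∃ 𝒞 : Finset (Finset V), 𝒞.card = n ∧
    (∀ C ∈ 𝒞, G.IsClique (↑C : Set V)) ∧ (∀ x : V, ∃! C, C ∈ 𝒞 ∧ x ∈ C)}

lemma coverSet_nonempty {V : Type*} [Fintype V] (G : SimpleGraph V) :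
    {n : ℕ | ∃ 𝒞 : Finset (Finset V), 𝒞.card = n ∧
    (∀ C ∈ 𝒞, G.IsClique (↑C : Set V)) ∧ (∀ x : V, ∃! C, C ∈ 𝒞 ∧ x ∈ C)}.Nonempty := by
  classical
  refine ⟨(Finset.univ.image fun x : V => ({x} : Finset V)).card,
    Finset.univ.image fun x : V => ({x} : Finset V), rfl, ?_, ?_⟩
  · intro C hC
    obtain ⟨x, -, rfl⟩ := Finset.mem_image.mp hC
    simp [SimpleGraph.isClique_iff, Set.Pairwise]
  · intro x
    refine ⟨{x}, ⟨Finset.mem_image.mpr ⟨x, Finset.mem_univ _, rfl⟩, Finset.mem_singleton_self x⟩, ?_⟩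
    rintro C ⟨hC, hxC⟩
    obtain ⟨y, -, rfl⟩ := Finset.mem_image.mp hC
    simp_all


/-- If `v` is a simplicial vertex of a finite graph `G`, then
`θ(G) = 1 + θ(G − N[v])`, where `G − N[v]` is the subgraph induced on the
complement of the closed neighborhood of `v`. -/
theorem cliqueCoverNumber_simplicial {V : Type*} [Fintype V] (G : SimpleGraph V)
    (v : V) (hv : G.IsClique (insert v (G.neighborSet v))) :
    cliqueCoverNumber G =
      1 + cliqueCoverNumber (G.induce ((insert v (G.neighborSet v))ᶜ : Set V)) := by
  classical
  set N : Set V := insert v (G.neighborSet v) with hNdef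
  set S : Set V := Nᶜ with hSdef
  haveI : Fintype ↥S := Fintype.ofFinite _
  set G' := G.induce S with hG'def
  have hadj : ∀ a b : ↥S, G'.Adj a b ↔ G.Adj ↑a ↑b := by
    intro a b; simp [hG'def, SimpleGraph.comap_adj]
  apply le_antisymm
  · -- θ(G) ≤ 1 + θ(G')
    obtain ⟨𝒞', hcard, hclq, hpart⟩ :=
      Nat.sInf_mem (coverSet_nonempty G')
    have hcard : 𝒞'.card = cliqueCoverNumber G' := hcard
    set Nfin : Finset V := Finset.univ.filter (· ∈ N) with hNfin
    have hmemN : ∀ x, x ∈ Nfin ↔ x ∈ N := by intro x; simp [hNfin]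
    set emb : ↥S ↪ V := Function.Embedding.subtype _ with hemb
    set 𝒞 : Finset (Finset V) := insert Nfin (𝒞'.image fun C => C.map emb) with h𝒞
    have hmemlift : ∀ (C : Finset ↥S) (x : V), x ∈ C.map emb ↔ ∃ h : x ∈ S, ⟨x, h⟩ ∈ C := by
      intro C x
      simp only [Finset.mem_map, hemb, Function.Embedding.coe_subtype]
      constructor
      · rintro ⟨a, ha, rfl⟩; exact ⟨a.2, ha⟩
      · rintro ⟨h, ha⟩; exact ⟨⟨x, h⟩, ha, rfl⟩
    have hNnot : Nfin ∉ 𝒞'.image fun C => C.map emb := by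
      intro h
      obtain ⟨C, -, hC⟩ := Finset.mem_image.mp h
      have hvN : v ∈ Nfin := (hmemN v).mpr (Set.mem_insert _ _)
      rw [← hC, hmemlift] at hvN
      obtain ⟨h, -⟩ := hvN
      exact h (Set.mem_insert _ _)
    have hcard𝒞 : 𝒞.card = 1 + cliqueCoverNumber G' := by
      rw [h𝒞, Finset.card_insert_of_notMem hNnot,
        Finset.card_image_of_injective _ (Finset.map_injective emb), hcard]
      omega
    apply Nat.sInf_le
    refine ⟨𝒞, hcard𝒞, ?_, ?_⟩
    · intro C hC
      rw [h𝒞, Finset.mem_insert] at hC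
      rcases hC with hC | hC
      · subst hC
        have hset : ((Nfin : Finset V) : Set V) = N := by ext x; simp [hmemN]
        rw [hset]; exact hv
      · obtain ⟨C', hC', rfl⟩ := Finset.mem_image.mp hC
        intro a ha b hb hab
        rw [Finset.mem_coe, hmemlift] at ha hb
        obtain ⟨haS, ha⟩ := ha
        obtain ⟨hbS, hb⟩ := hb
        have := hclq C' hC' ha hb (by simpa using hab)
        exact (hadj _ _).mp this
    · intro x
      by_cases hx : x ∈ N
      · refine ⟨Nfin, ⟨Finset.mem_insert_self _ _, (hmemN x).mpr hx⟩, ?_⟩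
        rintro C ⟨hC, hxC⟩
        rw [h𝒞, Finset.mem_insert] at hC
        rcases hC with rfl | hC
        · rfl
        · obtain ⟨C', -, rfl⟩ := Finset.mem_image.mp hC
          rw [hmemlift] at hxC
          exact absurd hx hxC.1
      · have hxS : x ∈ S := hx
        obtain ⟨C', ⟨hC', hxC'⟩, huniq⟩ := hpart ⟨x, hxS⟩
        refine ⟨C'.map emb, ⟨Finset.mem_insert_of_mem (Finset.mem_image_of_mem _ hC'),
          (hmemlift _ _).mpr ⟨hxS, hxC'⟩⟩, ?_⟩
        rintro C ⟨hC, hxC⟩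
        rw [h𝒞, Finset.mem_insert] at hC
        rcases hC with rfl | hC
        · exact absurd ((hmemN x).mp hxC) hx
        · obtain ⟨D, hD, rfl⟩ := Finset.mem_image.mp hC
          rw [hmemlift] at hxC
          obtain ⟨hS', hxD⟩ := hxC
          rw [huniq D ⟨hD, hxD⟩]
  · -- 1 + θ(G') ≤ θ(G)
    obtain ⟨𝒞, hcard, hclq, hpart⟩ := Nat.sInf_mem (coverSet_nonempty G)
    have hcard : 𝒞.card = cliqueCoverNumber G := hcard
    obtain ⟨C₀, ⟨hC₀, hvC₀⟩, -⟩ := hpart v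
    have hC₀N : (↑C₀ : Set V) ⊆ N := by
      intro u hu
      by_cases huv : u = v
      · exact huv ▸ Set.mem_insert _ _
      · have := hclq C₀ hC₀ hu hvC₀ huv
        exact Set.mem_insert_of_mem _ ((G.mem_neighborSet v u).mpr this.symm)
    set r : Finset V → Finset ↥S := fun D => D.subtype (· ∈ S) with hr
    set 𝒟 : Finset (Finset ↥S) := (𝒞.erase C₀).image r with h𝒟
    have hmemr : ∀ (D : Finset V) (x : ↥S), x ∈ r D ↔ ↑x ∈ D := by
      intro D x; simp [hr]
    have hθ : cliqueCoverNumber G' ≤ 𝒟.card := by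
      apply Nat.sInf_le
      refine ⟨𝒟, rfl, ?_, ?_⟩
      · intro C hC
        obtain ⟨D, hD, rfl⟩ := Finset.mem_image.mp hC
        intro a ha b hb hab
        rw [Finset.mem_coe, hmemr] at ha hb
        have := hclq D (Finset.mem_of_mem_erase hD) ha hb (fun h => hab (Subtype.ext h))
        exact (hadj _ _).mpr this
      · intro x
        obtain ⟨D, ⟨hD, hxD⟩, huniq⟩ := hpart ↑x
        have hDne : D ≠ C₀ := by
          rintro rfl
          exact x.2 (hC₀N hxD)
        refine ⟨r D, ⟨Finset.mem_image_of_mem _ (Finset.mem_erase.mpr ⟨hDne, hD⟩),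
          (hmemr _ _).mpr hxD⟩, ?_⟩
        rintro C ⟨hC, hxC⟩
        obtain ⟨D', hD', rfl⟩ := Finset.mem_image.mp hC
        rw [hmemr] at hxC
        rw [huniq D' ⟨Finset.mem_of_mem_erase hD', hxC⟩]
    have hcardD : 𝒟.card ≤ 𝒞.card - 1 := by
      calc 𝒟.card ≤ (𝒞.erase C₀).card := Finset.card_image_le
        _ = 𝒞.card - 1 := Finset.card_erase_of_mem hC₀
    have h1 : 1 ≤ 𝒞.card := Finset.card_pos.mpr ⟨C₀, hC₀⟩
    omega
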